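/- Fix γ ∈ Γ with Γ infinite, and let K = σ_1(Γ)^ω. For n ≥ 1 set K_n = {x ∈ K : γ ∈ x_j for all j < n−1 and γ ∉ x_{n−1}} (indices 0-based: γ belongs to the first n−1 coordinates but not the n-th). Then the K_n are pairwise disjoint clopen subsets of K, each homeomorphic to K, their union is K minus the single point (({γ},{γ},{γ},…)), and K is the one-point compactification of ⨁_n K_n. Consequently K is homeomorphic to the one-point compactification of the disjoint sum of countably many copies of K. -/

import Mathlib

/-!
A point `x ∈ K` other than the constant sequence `p = ({γ}, {γ}, …)` lies in exactly one `K_n`,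
namely for the first index `n` with `x n ≠ {γ}`; membership in `K_n` depends on finitely many
clopen coordinate conditions, so the `K_n` form a partition of `K \ {p}` into clopen sets.
Cutting a sequence of `K_n` after its `n`-th term gives
`K_n ≅ (σ_1(Γ) \ {{γ}}) × K ≅ σ_1(Γ \ {γ}) × K ≅ σ_1(Γ) × K ≅ K`, where the third step uses
`|Γ \ {γ}| = |Γ|` for infinite `Γ`. Finally `K` is compact Hausdorff, so the open embedding of
`⨁ K_n` onto `K \ {p}` identifies `K` with its one-point compactification.
-/

def sigmaSet (Γ : Type*) (n : ℕ) : Set (Γ → Bool) :=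
  {x | {γ | x γ = true}.Finite ∧ {γ | x γ = true}.ncard ≤ n}

/-- The singleton `{l}` as an element of `σ_1(Λ)`. -/
def singElt {Λ : Type*} [DecidableEq Λ] (l : Λ) : sigmaSet Λ 1 := by
  refine ⟨fun γ => decide (γ = l), ?_⟩
  have h : {γ : Λ | decide (γ = l) = true} = {l} := by ext γ; simp
  constructor
  · rw [h]; exact Set.finite_singleton l
  · rw [h]; simp

/-- The clopen set `K_n = {x ∈ σ_1(Γ)^ω : γ ∈ x_j for j < n, γ ∉ x_n}` (0-based, so this is
the `n+1`-st set of the paper). -/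
def Kset {Γ : Type*} (γ : Γ) (n : ℕ) : Set (ℕ → sigmaSet Γ 1) :=
  {x | (∀ j < n, (x j : Γ → Bool) γ = true) ∧ (x n : Γ → Bool) γ = false}

open Set Function Topology

section FirstExit

variable {A : Type*}

def firstExit (S : Set A) (n : ℕ) : Set (ℕ → A) :=
  {x | (∀ j < n, x j ∈ S) ∧ x n ∉ S}

theorem pairwise_disjoint_firstExit (S : Set A) : Pairwise (Disjoint on firstExit S) := by
  refine (pairwise_disjoint_on _).mpr fun m n hmn => disjoint_left.mpr ?_
  exact fun x hm hn => hm.2 (hn.1 m hmn)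

theorem iUnion_firstExit (S : Set A) : ⋃ n, firstExit S n = (univ.pi fun _ => S)ᶜ := by
  classical
  ext x
  simp only [mem_iUnion, mem_compl_iff, mem_univ_pi, not_forall]
  constructor
  · rintro ⟨n, -, hn⟩
    exact ⟨n, hn⟩
  · intro hex
    exact ⟨Nat.find hex, fun j hj => not_not.mp (Nat.find_min hex hj), Nat.find_spec hex⟩

variable [TopologicalSpace A]

theorem isClopen_firstExit {S : Set A} (hS : IsClopen S) (n : ℕ) : IsClopen (firstExit S n) := by
  have hcoord : ∀ j, IsClopen ((fun x : ℕ → A => x j) ⁻¹' S) := fun j =>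
    hS.preimage (continuous_apply j)
  have h : firstExit S n = (⋂ j ∈ Finset.range n, (fun x : ℕ → A => x j) ⁻¹' S) ∩
      ((fun x : ℕ → A => x n) ⁻¹' S)ᶜ := by
    ext x
    simp [firstExit]
  rw [h]
  exact (isClopen_biInter_finset fun j _ => hcoord j).inter (hcoord n).compl

def firstExitSingletonHomeomorph (a : A) (n : ℕ) :
    firstExit {a} n ≃ₜ ({a}ᶜ : Set A) × (ℕ → A) where
  toFun x := (⟨x.1 n, x.2.2⟩, fun k => x.1 (n + 1 + k))
  invFun p := ⟨fun j => if j < n then a else if j = n then p.1 else p.2 (j - (n + 1)),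
    fun j hj => by simp [hj], by simp only [lt_irrefl, if_false, if_true]; exact p.1.2⟩
  left_inv x := by
    ext j
    rcases lt_trichotomy j n with h | rfl | h
    · simpa [h] using (x.2.1 j h).symm
    · simp
    · simp [show ¬ j < n by omega, h.ne', show n + 1 + (j - (n + 1)) = j by omega]
  right_inv p := by
    ext k
    · simp
    · simp [show ¬ n + 1 + k < n by omega, show n + 1 + k ≠ n by omega]
  continuous_toFun :=
    ((continuous_apply n).comp continuous_subtype_val).subtype_mk _ |>.prodMk <|
      continuous_pi fun k => (continuous_apply (n + 1 + k)).comp continuous_subtype_val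
  continuous_invFun := by
    refine .subtype_mk (continuous_pi fun j => ?_) _
    split_ifs <;> fun_prop

end FirstExit

section Homeomorphs

variable {X : Type*} [TopologicalSpace X]

/-- `(a, x) ↦ (a, x 0, x 1, …)` -/
def Homeomorph.prodNatArrow : X × (ℕ → X) ≃ₜ (ℕ → X) :=
  (Homeomorph.prodComm X (ℕ → X)).trans <|
    ((Homeomorph.refl _).prodCongr (Homeomorph.funUnique PUnit.{1} X).symm).trans <|
      Homeomorph.sumArrowHomeomorphProdArrow.symm.trans <|
        Homeomorph.piCongrLeft (Y := fun _ => X) Equiv.natSumPUnitEquivNat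

def Homeomorph.sigmaEquivProdOfEquiv {ι : Type*} [TopologicalSpace ι] [DiscreteTopology ι]
    {Y : ι → Type*} [∀ i, TopologicalSpace (Y i)] (e : ∀ i, Y i ≃ₜ X) : (Σ i, Y i) ≃ₜ ι × X where
  toEquiv := Equiv.sigmaEquivProdOfEquiv fun i => (e i).toEquiv
  continuous_toFun := continuous_sigma fun i => continuous_const.prodMk (e i).continuous
  continuous_invFun := continuous_prod_of_discrete_left.mpr fun i =>
    continuous_sigmaMk.comp (e i).symm.continuous

theorem nonempty_homeomorph_onePoint_sigma [CompactSpace X] [T2Space X] {ι : Type*}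
    {U : ι → Set X} {p : X} (hdisj : Pairwise (Disjoint on U)) (hopen : ∀ i, IsOpen (U i))
    (hcover : ⋃ i, U i = {p}ᶜ) : Nonempty (X ≃ₜ OnePoint (Σ i, U i)) := by
  let f : (Σ i, U i) → X := fun q => q.2
  have hf : f = Subtype.val ∘ sigmaToiUnion U := rfl
  have hemb : IsOpenEmbedding f :=
    .of_continuous_injective_isOpenMap (continuous_sigma fun _ => continuous_subtype_val)
      (hf ▸ Subtype.val_injective.comp (sigmaToiUnion_injective U hdisj))
      (isOpenMap_sigma.mpr fun i => (hopen i).isOpenMap_subtype_val)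
  have hrange : range f = {p}ᶜ := by
    rw [hf, range_comp, (sigmaToiUnion_surjective U).range_eq, image_univ, Subtype.range_coe,
      hcover]
  exact ⟨(OnePoint.equivOfIsEmbeddingOfRangeEq p f hemb.isEmbedding hrange).symm⟩

end Homeomorphs

section SigmaOne

variable {Λ Γ : Type*}

theorem mem_sigmaSet_one_iff {y : Γ → Bool} :
    y ∈ sigmaSet Γ 1 ↔ {δ | y δ = true}.Subsingleton :=
  ⟨fun ⟨hfin, hcard⟩ _ ha _ hb => (ncard_le_one_iff hfin).mp hcard ha hb,
    fun hs => ⟨hs.finite, (ncard_le_one_iff hs.finite).mpr fun ha hb => hs ha hb⟩⟩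

theorem isClosed_sigmaSet_one : IsClosed (sigmaSet Γ 1) := by
  have h : sigmaSet Γ 1 = ⋂ (a) (b), {y : Γ → Bool | y a = true → y b = true → a = b} := by
    ext y
    simp only [mem_sigmaSet_one_iff, mem_iInter]
    exact ⟨fun h a b ha hb => h ha hb, fun h a ha b hb => h a b ha hb⟩
  rw [h]
  exact isClosed_iInter fun a => isClosed_iInter fun b =>
    (isClosed_discrete {q : Bool × Bool | q.1 = true → q.2 = true → a = b}).preimage
      (f := fun y : Γ → Bool => (y a, y b)) (by fun_prop)

instance : CompactSpace (sigmaSet Γ 1) :=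
  isCompact_iff_compactSpace.mp isClosed_sigmaSet_one.isCompact

def sigmaSetOneComap (f : Λ → Γ) (hf : Injective f) : C(sigmaSet Γ 1, sigmaSet Λ 1) where
  toFun y := ⟨fun l => (y : Γ → Bool) (f l), mem_sigmaSet_one_iff.mpr <|
    (mem_sigmaSet_one_iff.mp y.2).preimage hf⟩
  continuous_toFun := by
    apply Continuous.subtype_mk
    exact continuous_pi fun l => (continuous_apply (f l)).comp continuous_subtype_val

def sigmaSetOneCongr (e : Λ ≃ Γ) : sigmaSet Λ 1 ≃ₜ sigmaSet Γ 1 where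
  toFun := sigmaSetOneComap e.symm e.symm.injective
  invFun := sigmaSetOneComap e e.injective
  left_inv y := by ext; simp [sigmaSetOneComap]
  right_inv y := by ext; simp [sigmaSetOneComap]
  continuous_toFun := ContinuousMap.continuous _
  continuous_invFun := ContinuousMap.continuous _

variable [DecidableEq Γ]

theorem eq_singElt_iff {γ : Γ} {y : sigmaSet Γ 1} : y = singElt γ ↔ (y : Γ → Bool) γ = true := by
  refine ⟨fun h => by simp [h, singElt], fun h => Subtype.ext (funext fun δ => ?_)⟩
  have hγ : (singElt γ : Γ → Bool) δ = decide (δ = γ) := rfl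
  rw [hγ]
  by_cases hδ : δ = γ
  · simp [hδ, h]
  · simpa [hδ] using fun hyδ => hδ (mem_sigmaSet_one_iff.mp y.2 hyδ h)

theorem kset_eq_firstExit (γ : Γ) : Kset γ = firstExit {singElt γ} := by
  ext n x
  simp [Kset, firstExit, eq_singElt_iff]

theorem isClopen_singleton_singElt (γ : Γ) : IsClopen {singElt γ} := by
  have h : {singElt γ} = (fun y : sigmaSet Γ 1 => (y : Γ → Bool) γ) ⁻¹' {true} := by
    ext y
    simp [eq_singElt_iff]
  rw [h]
  exact (isClopen_discrete _).preimage ((continuous_apply γ).comp continuous_subtype_val)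

/-- A member of `σ_1(Γ)` other than `{γ}` is a subset of `Γ \ {γ}`. -/
def complSingEltHomeomorph (γ : Γ) :
    ({singElt γ}ᶜ : Set (sigmaSet Γ 1)) ≃ₜ sigmaSet ({γ}ᶜ : Set Γ) 1 where
  toFun y := sigmaSetOneComap Subtype.val Subtype.val_injective y
  invFun z := ⟨⟨fun δ => if h : δ = γ then false else (z : ({γ}ᶜ : Set Γ) → Bool) ⟨δ, h⟩,
      mem_sigmaSet_one_iff.mpr <| ((mem_sigmaSet_one_iff.mp z.2).image Subtype.val).anti
        fun δ hδ => by
          by_cases h : δ = γ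
          · simp [h] at hδ
          · exact ⟨⟨δ, h⟩, by simpa [h] using hδ, rfl⟩⟩,
    by simp [eq_singElt_iff]⟩
  left_inv y := by
    ext δ
    by_cases h : δ = γ
    · have hy := y.2
      simp only [mem_compl_iff, mem_singleton_iff, eq_singElt_iff, Bool.not_eq_true] at hy
      simpa [h, sigmaSetOneComap] using hy
    · simp [h, sigmaSetOneComap]
  right_inv z := by
    ext δ
    simp [sigmaSetOneComap, mem_compl_singleton_iff.mp δ.2]
  continuous_toFun := (sigmaSetOneComap _ _).continuous.comp continuous_subtype_val
  continuous_invFun := by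
    refine .subtype_mk (.subtype_mk (continuous_pi fun δ => ?_) _) _
    split_ifs
    exacts [continuous_const, (continuous_apply _).comp continuous_subtype_val]

end SigmaOne

theorem nonempty_homeomorph_compl_singElt {Γ : Type*} [Infinite Γ] [DecidableEq Γ] (γ : Γ) :
    Nonempty (({singElt γ}ᶜ : Set (sigmaSet Γ 1)) ≃ₜ sigmaSet Γ 1) := by
  obtain ⟨e⟩ : Nonempty (({γ}ᶜ : Set Γ) ≃ Γ) :=
    Cardinal.eq.mp (by simpa using Cardinal.mk_compl_finset_of_infinite {γ})
  exact ⟨(complSingEltHomeomorph γ).trans (sigmaSetOneCongr e)⟩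

/-- The sets `K_n` are pairwise disjoint clopen subsets of `K = σ_1(Γ)^ω`, each homeomorphic
to `K`; their union is `K` minus the constant sequence `({γ},{γ},…)`, `K` is the one-point
compactification of their disjoint sum, and hence `K` is homeomorphic to the one-point
compactification of the sum of countably many copies of `K`. -/
theorem stmt_14 (Γ : Type*) [Infinite Γ] [DecidableEq Γ] (γ : Γ) :
    Pairwise (Function.onFun Disjoint (Kset γ)) ∧
    (∀ n, IsClopen (Kset γ n)) ∧
    (∀ n, Nonempty ((Kset γ n) ≃ₜ (ℕ → (sigmaSet Γ 1)))) ∧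
    (⋃ n, Kset γ n) = {(fun _ => singElt γ : ℕ → sigmaSet Γ 1)}ᶜ ∧
    Nonempty ((ℕ → (sigmaSet Γ 1)) ≃ₜ OnePoint (Σ n : ℕ, (Kset γ n))) ∧
    Nonempty ((ℕ → (sigmaSet Γ 1)) ≃ₜ OnePoint (ℕ × (ℕ → (sigmaSet Γ 1)))) := by
  rw [kset_eq_firstExit]
  have hclopen := isClopen_firstExit (isClopen_singleton_singElt γ)
  have hunion : ⋃ n, firstExit {singElt γ} n = {fun _ => singElt γ}ᶜ := by
    rw [iUnion_firstExit, univ_pi_singleton]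
  obtain ⟨e⟩ := nonempty_homeomorph_compl_singElt γ
  let piece (n : ℕ) : firstExit {singElt γ} n ≃ₜ (ℕ → sigmaSet Γ 1) :=
    (firstExitSingletonHomeomorph _ n).trans (e.prodCongr (Homeomorph.refl _)) |>.trans
      Homeomorph.prodNatArrow
  obtain ⟨f⟩ := nonempty_homeomorph_onePoint_sigma (pairwise_disjoint_firstExit _)
    (fun n => (hclopen n).isOpen) hunion
  exact ⟨pairwise_disjoint_firstExit _, hclopen, fun n => ⟨piece n⟩, hunion, ⟨f⟩,
    ⟨f.trans (Homeomorph.sigmaEquivProdOfEquiv piece).onePointCongr⟩⟩
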